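/- Let A, B, C, D be λ-circulant n×n matrices over a commutative ring R and J the back-diagonal matrix of order n. Then -A·C·J - B·D·J + C·J·Aᵀ + D·J·Bᵀ = 0 and -A·D·J + B·C·J - C·J·Bᵀ + D·J·Aᵀ = 0. -/

import Mathlib

open Matrix Polynomial

/-- The `l`-circulant matrix with first row `a`: each row is the `l`-cyclic
shift of the previous one (last entry wraps to the front multiplied by `l`). -/
def lamCirc {R : Type*} [CommRing R] (n : ℕ) (l : R) (a : Fin n → R) :
    Matrix (Fin n) (Fin n) R :=
  fun i j =>
    if h : (i : ℕ) ≤ (j : ℕ) then a ⟨(j : ℕ) - (i : ℕ), by have := j.isLt; omega⟩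
    else l * a ⟨n + (j : ℕ) - (i : ℕ), by have := i.isLt; have := j.isLt; omega⟩

/-- `A` is an `l`-circulant matrix. -/
def IsLamCirc {R : Type*} [CommRing R] (n : ℕ) (l : R) (A : Matrix (Fin n) (Fin n) R) : Prop :=
  ∃ a : Fin n → R, A = lamCirc n l a

/-- The back-diagonal permutation matrix `J` with `J_{i, n-i+1} = 1` (1-indexed). -/
def backDiag {R : Type*} [CommRing R] (n : ℕ) : Matrix (Fin n) (Fin n) R :=
  fun i j => if (i : ℕ) + (j : ℕ) + 1 = n then 1 else 0

/-!
Two facts about `l`-circulant matrices do all the work. They commute: writing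
`X i j = l^[j < i] * x (j - i)`, the reindexing `k ↦ i + j - k` of `(X * Y) i j` swaps the two
offsets `k - i` and `j - k`, and the wrap-around factor depends on them only through their sum.
They are persymmetric, `X * J = J * Xᵀ`. Hence `X * J * Yᵀ = Y * X * J`, and each block
identity reduces to the cancellation of equal terms.
-/

namespace Fin

variable {n : ℕ}

theorem val_sub_eq_ite (a b : Fin n) :
    ((a - b : Fin n) : ℕ) = if b ≤ a then (a : ℕ) - b else n + a - b := by
  split_ifs with h
  exacts [coe_sub_iff_le.2 h, coe_sub_iff_lt.2 (not_le.1 h)]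

theorem rev_sub_rev (i j : Fin n) : j.rev - i.rev = i - j := by
  ext
  simp only [val_sub_eq_ite, rev_le_rev, val_rev]
  split_ifs <;> omega

end Fin

section

variable {R : Type*} [CommRing R] {n : ℕ}

theorem lamCirc_apply [NeZero n] (l : R) (a : Fin n → R) (i j : Fin n) :
    lamCirc n l a i j = (if j < i then l else 1) * a (j - i) := by
  rcases le_or_gt i j with hij | hji
  · rw [lamCirc, dif_pos (Fin.le_def.1 hij), if_neg (not_lt.2 hij), one_mul]
    congr
    exact (Fin.coe_sub_iff_le.2 hij).symm
  · rw [lamCirc, dif_neg (not_le.2 (Fin.lt_def.1 hji)), if_pos hji]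
    congr
    exact (Fin.coe_sub_iff_lt.2 hji).symm

-- The wrap-around factor of a term of `(X * Y) i j` is symmetric in the offsets `k - i`, `j - k`.
theorem lamCirc_weight_mul (l : R) (i k j : Fin n) :
    (if k < i then l else 1) * (if j < k then l else 1) =
      (if j < i then l else 1) * (if n ≤ ((k - i : Fin n) : ℕ) + (j - k : Fin n) then l else 1) := by
  simp only [Fin.val_sub_eq_ite, Fin.le_iff_val_le_val, Fin.lt_def]
  have := i.isLt; have := j.isLt; have := k.isLt
  split_ifs <;> first | omega | ring

theorem lamCirc_mul_comm (l : R) (a c : Fin n → R) :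
    lamCirc n l a * lamCirc n l c = lamCirc n l c * lamCirc n l a := by
  rcases Nat.eq_zero_or_pos n with rfl | hn
  · exact Subsingleton.elim _ _
  have : NeZero n := ⟨hn.ne'⟩
  ext i j
  simp only [mul_apply, lamCirc_apply]
  refine Fintype.sum_equiv (Equiv.subLeft (i + j)) _ _ fun k => ?_
  rw [Equiv.subLeft_apply]
  set m := i + j - k with hm
  have hleft : m - i = j - k := by rw [hm]; abel
  have hright : j - m = k - i := by rw [hm]; abel
  have hwk := lamCirc_weight_mul l i k j
  have hwm := lamCirc_weight_mul l i m j
  rw [hleft, hright, add_comm] at hwm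
  rw [hleft, hright]
  linear_combination (a (k - i) * c (j - k)) * (hwk - hwm)

theorem backDiag_eq_toMatrix_revPerm : backDiag (R := R) n = Fin.revPerm.toPEquiv.toMatrix := by
  ext i j
  simp only [backDiag, PEquiv.toMatrix_apply, Equiv.toPEquiv_apply, Option.mem_some_iff,
    Fin.revPerm_apply, Fin.ext_iff, Fin.val_rev]
  congr 1
  apply propext
  omega

theorem mul_backDiag (M : Matrix (Fin n) (Fin n) R) : M * backDiag n = M.submatrix id Fin.rev := by
  rw [backDiag_eq_toMatrix_revPerm, PEquiv.mul_toMatrix_toPEquiv, Fin.revPerm_symm]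
  rfl

theorem backDiag_mul (M : Matrix (Fin n) (Fin n) R) : backDiag n * M = M.submatrix Fin.rev id := by
  rw [backDiag_eq_toMatrix_revPerm, PEquiv.toMatrix_toPEquiv_mul]
  rfl

theorem lamCirc_submatrix_rev (l : R) (a : Fin n → R) :
    (lamCirc n l a).submatrix Fin.rev Fin.rev = (lamCirc n l a)ᵀ := by
  rcases Nat.eq_zero_or_pos n with rfl | hn
  · exact Subsingleton.elim _ _
  have : NeZero n := ⟨hn.ne'⟩
  ext i j
  simp only [submatrix_apply, transpose_apply, lamCirc_apply, Fin.rev_lt_rev, Fin.rev_sub_rev]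

theorem lamCirc_mul_backDiag (l : R) (a : Fin n → R) :
    lamCirc n l a * backDiag n = backDiag n * (lamCirc n l a)ᵀ := by
  rw [mul_backDiag, backDiag_mul, ← lamCirc_submatrix_rev, submatrix_submatrix,
    Fin.rev_involutive.comp_self, Function.comp_id]

namespace IsLamCirc

variable {l : R} {X Y : Matrix (Fin n) (Fin n) R}

theorem commute (hX : IsLamCirc n l X) (hY : IsLamCirc n l Y) : Commute X Y := by
  obtain ⟨x, rfl⟩ := hX
  obtain ⟨y, rfl⟩ := hY
  exact lamCirc_mul_comm l x y

theorem mul_backDiag (hX : IsLamCirc n l X) : X * backDiag n = backDiag n * Xᵀ := by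
  obtain ⟨x, rfl⟩ := hX
  exact lamCirc_mul_backDiag l x

theorem mul_backDiag_mul_transpose (hX : IsLamCirc n l X) (hY : IsLamCirc n l Y) :
    X * backDiag n * Yᵀ = Y * X * backDiag n := by
  rw [mul_assoc, ← hY.mul_backDiag, ← mul_assoc, (hX.commute hY).eq]

end IsLamCirc

end

/-- Off-diagonal block cancellations in the proof of Construction I. -/
theorem construction_I_block_cancellation {R : Type*} [CommRing R] {n : ℕ} (l : R)
    (A B C D : Matrix (Fin n) (Fin n) R)
    (hA : IsLamCirc n l A) (hB : IsLamCirc n l B)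
    (hC : IsLamCirc n l C) (hD : IsLamCirc n l D) :
    -(A * C * backDiag n) - B * D * backDiag n
      + C * backDiag n * Aᵀ + D * backDiag n * Bᵀ = 0 ∧
    -(A * D * backDiag n) + B * C * backDiag n
      - C * backDiag n * Bᵀ + D * backDiag n * Aᵀ = 0 := by
  constructor
  · rw [hC.mul_backDiag_mul_transpose hA, hD.mul_backDiag_mul_transpose hB]
    abel
  · rw [hC.mul_backDiag_mul_transpose hB, hD.mul_backDiag_mul_transpose hA]
    abel
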